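/- Let E be a real inner product space and let l_1, ..., l_T : E → ℝ be differentiable with each l_i being μ-strongly convex for some μ > 0. Suppose the iterates satisfy the follow-the-leader (FTL) updates: for each t, w_t is a global minimizer (with vanishing gradient) of F_t(w) := Σ_{i=1}^{t-1} l_i(w), and w_{T+1} is a global minimizer of F_{T+1}. Then for any comparator w* ∈ E, the regret satisfies R(T) = Σ_{t=1}^{T} [l_t(w_t) − l_t(w*)] ≤ Σ_{t=1}^{T} ‖∇l_t(w_t)‖² / (2 μ t). -/

import Mathlib

/-!
With `F_t = l_1 + ⋯ + l_{t-1}`, telescoping `F_{t+1} = F_t + l_t` and using that `w_{T+1}`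
minimises `F_{T+1}` bounds the regret by `∑ₜ (F_{t+1}(w_t) - F_{t+1}(w_{t+1}))`. Each `F_{t+1}` is
`tμ`-strongly convex, and since `w_t` is a critical point of `F_t`, its gradient at `w_t` is
`∇l_t(w_t)`. The Polyak–Łojasiewicz inequality `f(x) - f(y) ≤ ‖∇f(x)‖² / (2m)` for `m`-strongly
convex `f` then bounds the `t`-th term by `‖∇l_t(w_t)‖² / (2μt)`.
-/

open Finset InnerProductSpace
open scoped Gradient RealInnerProductSpace

theorem HasGradientAt.add {𝕜 F : Type*} [RCLike 𝕜] [NormedAddCommGroup F] [InnerProductSpace 𝕜 F]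
    [CompleteSpace F] {f g : F → 𝕜} {f' g' x : F} (hf : HasGradientAt f f' x)
    (hg : HasGradientAt g g' x) : HasGradientAt (fun y => f y + g y) (f' + g') x := by
  rw [hasGradientAt_iff_hasFDerivAt] at hf hg ⊢
  rw [map_add]
  exact hf.fun_add hg

section StrongConvexity

variable {E : Type*} [NormedAddCommGroup E]

theorem StrongConvexOn.add [NormedSpace ℝ E] {s : Set E} {f g : E → ℝ} {m n : ℝ}
    (hf : StrongConvexOn s m f) (hg : StrongConvexOn s n g) :
    StrongConvexOn s (m + n) (f + g) := by
  refine (UniformConvexOn.add hf hg).mono fun r => le_of_eq ?_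
  simp only [Pi.add_apply]
  ring

theorem StrongConvexOn.fun_sum [NormedSpace ℝ E] {ι : Type*} {s : Set E} (hs : Convex ℝ s)
    {t : Finset ι} {f : ι → E → ℝ} {m : ι → ℝ} (h : ∀ i ∈ t, StrongConvexOn s (m i) (f i)) :
    StrongConvexOn s (∑ i ∈ t, m i) (fun x => ∑ i ∈ t, f i x) := by
  induction t using Finset.cons_induction with
  | empty => simpa using convexOn_const (0 : ℝ) hs
  | cons i t hi ih =>
    simp only [Finset.sum_cons]
    exact (h i (mem_cons_self i t)).add (ih fun j hj => h j (mem_cons_of_mem hj))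

theorem StrongConvexOn.fun_sum_const [NormedSpace ℝ E] {ι : Type*} {s : Set E} (hs : Convex ℝ s)
    {t : Finset ι} {f : ι → E → ℝ} {m : ℝ} (h : ∀ i ∈ t, StrongConvexOn s m (f i)) :
    StrongConvexOn s (#t * m) (fun x => ∑ i ∈ t, f i x) := by
  simpa using StrongConvexOn.fun_sum hs h

theorem ConvexOn.le_sub_of_hasFDerivAt [NormedSpace ℝ E] {s : Set E} {φ : E → ℝ}
    {φ' : E →L[ℝ] ℝ} {x y : E} (hφ : ConvexOn ℝ s φ) (hx : x ∈ s) (hy : y ∈ s)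
    (hφ' : HasFDerivAt φ φ' x) : φ' (y - x) ≤ φ y - φ x := by
  set g : ℝ →ᵃ[ℝ] E := AffineMap.lineMap x y
  have hg : ∀ r : ℝ, g r = x + r • (y - x) := fun r => by
    simp [g, AffineMap.lineMap_apply, add_comm]
  have hderiv : HasDerivAt (φ ∘ g) (φ' (y - x)) 0 := by
    have hline : HasDerivAt g (y - x) 0 := by
      simpa [funext hg] using ((hasDerivAt_id (0 : ℝ)).smul_const (y - x)).const_add x
    exact HasFDerivAt.comp_hasDerivAt _ (by simpa [hg] using hφ') hline
  have hslope := (hφ.comp_affineMap g).le_slope_of_hasDerivWithinAt_Ioi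
    (x := 0) (y := 1) (by simpa [hg] using hx) (by simpa [hg] using hy) one_pos
    hderiv.hasDerivWithinAt
  simpa [slope, hg] using hslope

variable [InnerProductSpace ℝ E] [CompleteSpace E] {s : Set E} {f : E → ℝ} {m : ℝ} {g x y : E}

theorem StrongConvexOn.add_inner_add_le_of_hasGradientAt (hf : StrongConvexOn s m f)
    (hx : x ∈ s) (hy : y ∈ s) (hg : HasGradientAt f g x) :
    f x + ⟪g, y - x⟫ + m / 2 * ‖y - x‖ ^ 2 ≤ f y := by
  have hquad : HasFDerivAt (fun z : E => m / 2 * ‖z‖ ^ 2) ((m / 2) • (2 • innerSL ℝ x)) x :=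
    (hasStrictFDerivAt_norm_sq x).hasFDerivAt.const_mul (m / 2)
  have hfirst := (strongConvexOn_iff_convex.mp hf).le_sub_of_hasFDerivAt hx hy
    ((hasGradientAt_iff_hasFDerivAt.mp hg).sub hquad)
  simp only [sub_apply, smul_apply, innerSL_apply_apply,
    toDual_apply_apply, smul_eq_mul, nsmul_eq_mul, Nat.cast_ofNat] at hfirst
  have hnorm : ‖y - x‖ ^ 2 = ‖y‖ ^ 2 - 2 * ⟪x, y⟫ + ‖x‖ ^ 2 := by
    rw [norm_sub_sq_real, real_inner_comm]
  have hinner : ⟪x, y - x⟫ = ⟪x, y⟫ - ‖x‖ ^ 2 := by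
    rw [inner_sub_right, real_inner_self_eq_norm_sq]
  rw [hnorm]
  rw [hinner] at hfirst
  linarith

theorem StrongConvexOn.sub_le_of_hasGradientAt (hf : StrongConvexOn s m f) (hm : 0 < m)
    (hx : x ∈ s) (hy : y ∈ s) (hg : HasGradientAt f g x) : f x - f y ≤ ‖g‖ ^ 2 / (2 * m) := by
  have hlower := hf.add_inner_add_le_of_hasGradientAt hx hy hg
  have hcs : -(‖g‖ * ‖y - x‖) ≤ ⟪g, y - x⟫ :=
    neg_le_of_abs_le (abs_real_inner_le_norm g (y - x))
  rw [le_div_iff₀ (by positivity)]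
  nlinarith [sq_nonneg (‖g‖ - m * ‖y - x‖)]

end StrongConvexity

theorem sum_sub_eq_sum_sub_of_succ_eq_add {α : Type*} (F l : ℕ → α → ℝ) (w : ℕ → α)
    (hF₁ : F 1 (w 1) = 0) (hstep : ∀ t ≥ 1, ∀ x, F (t + 1) x = F t x + l t x) (T : ℕ) :
    ∑ t ∈ Icc 1 T, (F (t + 1) (w t) - F (t + 1) (w (t + 1)))
      = ∑ t ∈ Icc 1 T, l t (w t) - F (T + 1) (w (T + 1)) := by
  have htel : ∑ t ∈ Icc 1 T, (F (t + 1) (w (t + 1)) - F t (w t)) = F (T + 1) (w (T + 1)) := by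
    rw [← Finset.Ico_add_one_right_eq_Icc, Finset.sum_Ico_sub (fun t => F t (w t)) (by omega), hF₁,
      sub_zero]
  rw [← htel, ← sum_sub_distrib]
  refine sum_congr rfl fun t ht => ?_
  rw [hstep t (mem_Icc.mp ht).1]
  ring

/-- FTL regret bound for strongly-convex losses in terms of gradient norms at the iterates. -/
theorem ftl_regret_strongly_convex {E : Type*} [NormedAddCommGroup E] [InnerProductSpace ℝ E]
    [CompleteSpace E] (T : ℕ) (μ : ℝ) (hμ : 0 < μ) (l : ℕ → E → ℝ) (w : ℕ → E)
    (hl : ∀ i ∈ Finset.Icc 1 T, Differentiable ℝ (l i))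
    (hsc : ∀ i ∈ Finset.Icc 1 T, ConvexOn ℝ Set.univ (fun x => l i x - μ / 2 * ‖x‖ ^ 2))
    (F : ℕ → E → ℝ)
    (hF : ∀ t x, F t x = ∑ i ∈ Finset.Icc 1 (t - 1), l i x)
    (hmin : ∀ t ∈ Finset.Icc 1 T, (∀ x, F t (w t) ≤ F t x) ∧ ∇ (F t) (w t) = 0)
    (hminT : ∀ x, F (T + 1) (w (T + 1)) ≤ F (T + 1) x) :
    ∀ wstar : E,
      ∑ t ∈ Finset.Icc 1 T, (l t (w t) - l t wstar)
        ≤ ∑ t ∈ Finset.Icc 1 T, ‖∇ (l t) (w t)‖ ^ 2 / (2 * μ * t) := by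
  intro wstar
  have hF_succ : ∀ t x, F (t + 1) x = ∑ i ∈ Icc 1 t, l i x := fun t x => by
    rw [hF, Nat.add_sub_cancel]
  have hstep : ∀ t ≥ 1, ∀ x, F (t + 1) x = F t x + l t x := fun t ht x => by
    obtain ⟨s, rfl⟩ : ∃ s, t = s + 1 := ⟨t - 1, by omega⟩
    rw [hF_succ, hF_succ, sum_Icc_succ_top (by omega)]
  have hround : ∀ t ∈ Icc 1 T,
      F (t + 1) (w t) - F (t + 1) (w (t + 1)) ≤ ‖∇ (l t) (w t)‖ ^ 2 / (2 * μ * t) := by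
    intro t ht
    obtain ⟨ht1, htT⟩ := mem_Icc.mp ht
    have hconv : StrongConvexOn Set.univ (t * μ) (F (t + 1)) := by
      simpa [funext (hF_succ t)] using StrongConvexOn.fun_sum_const convex_univ fun i hi =>
        strongConvexOn_iff_convex.mpr (hsc i (Icc_subset_Icc_right htT hi))
    have hgrad : HasGradientAt (F (t + 1)) (∇ (l t) (w t)) (w t) := by
      have hFt : Differentiable ℝ (F t) := by
        rw [funext (hF t)]
        exact Differentiable.fun_sum fun i hi => hl i (by simp only [mem_Icc] at hi ⊢; omega)
      have hcrit : HasGradientAt (F t) 0 (w t) := (hmin t ht).2 ▸ (hFt (w t)).hasGradientAt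
      simpa only [zero_add, ← funext (hstep t ht1)] using hcrit.add (hl t ht (w t)).hasGradientAt
    calc F (t + 1) (w t) - F (t + 1) (w (t + 1)) ≤ ‖∇ (l t) (w t)‖ ^ 2 / (2 * (t * μ)) :=
          hconv.sub_le_of_hasGradientAt (by positivity) trivial trivial hgrad
      _ = ‖∇ (l t) (w t)‖ ^ 2 / (2 * μ * t) := by ring_nf
  calc ∑ t ∈ Icc 1 T, (l t (w t) - l t wstar)
      = ∑ t ∈ Icc 1 T, l t (w t) - F (T + 1) wstar := by rw [sum_sub_distrib, hF_succ]
    _ ≤ ∑ t ∈ Icc 1 T, l t (w t) - F (T + 1) (w (T + 1)) := sub_le_sub_left (hminT wstar) _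
    _ = ∑ t ∈ Icc 1 T, (F (t + 1) (w t) - F (t + 1) (w (t + 1))) :=
      (sum_sub_eq_sum_sub_of_succ_eq_add F l w (by simp [hF]) hstep T).symm
    _ ≤ ∑ t ∈ Icc 1 T, ‖∇ (l t) (w t)‖ ^ 2 / (2 * μ * t) := sum_le_sum hround
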